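/- Let n ≥ 2, k ≥ 1, and let α ∈ [n]^n be a complete k-Naples parking function (α ∈ PF_{n,k}). Then for every j ∈ [n], the number of cars with preference at least j that park in spots strictly smaller than j is exactly u_α(j): |{i ∈ [n] : a_i ≥ j and ψ_k(c_i) < j}| = u_α(j). -/

import Mathlib

open Finset

/-- The spot where a single car parks on a one-way street with spots `1,…,n`:
`occ` is the set of already occupied spots, `p` is the car's preference, and
`r` is its backward allowance (it follows the `r`-Naples rule).  If spot `p`
is free the car parks there; otherwise it checks spots `p-1, p-2, …, max (p-r) 1`
and parks in the first free one among these; otherwise it parks in the smallest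
free spot `> p` (and `≤ n`); `none` means the car fails to park. -/
def parkSpot (n : ℕ) (occ : Finset ℕ) (p r : ℕ) : Option ℕ :=
  if p ∈ occ then
    if hb : ((Finset.Ico (max 1 (p - r)) p).filter (fun j => j ∉ occ)).Nonempty then
      some (((Finset.Ico (max 1 (p - r)) p).filter (fun j => j ∉ occ)).max' hb)
    else if hf : ((Finset.Ioc p n).filter (fun j => j ∉ occ)).Nonempty then
      some (((Finset.Ioc p n).filter (fun j => j ∉ occ)).min' hf)
    else none
  else some p

/-- The set of occupied spots after the first `i` of the `m` cars (with
preferences `a` and backward allowances `r`) have attempted to park on a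
street with `n` spots. -/
def occUpTo (n m : ℕ) (a r : Fin m → ℕ) : ℕ → Finset ℕ
  | 0 => ∅
  | i + 1 =>
    let occ := occUpTo n m a r i
    if h : i < m then
      match parkSpot n occ (a ⟨i, h⟩) (r ⟨i, h⟩) with
      | some s => insert s occ
      | none => occ
    else occ

/-- The outcome map: the spot where car `c_i` parks (`none` if it fails to park),
when the `m` cars with preferences `a` park on `n` spots, car `c_i` following
the `r i`-Naples rule. -/
def outcome (n m : ℕ) (a r : Fin m → ℕ) (i : Fin m) : Option ℕ :=
  parkSpot n (occUpTo n m a r i.val) (a i) (r i)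

/-- The outcome map with values in `ℕ∞`: failure to park is recorded as `∞`. -/
def outcomeE (n m : ℕ) (a r : Fin m → ℕ) (i : Fin m) : ENat :=
  (outcome n m a r i).elim ⊤ (fun s => (s : ENat))

/-- All `m` cars (preferences `a`, car `c_i` following the `r i`-Naples rule)
are able to park on the street with `n` spots.  For `m = n` this says that `r`
is a parking strategy for `a`, i.e. `(a, r) ∈ PR_n`. -/
def AllPark (n m : ℕ) (a r : Fin m → ℕ) : Prop :=
  ∀ i : Fin m, (outcome n m a r i).isSome

instance (n m : ℕ) (a r : Fin m → ℕ) : Decidable (AllPark n m a r) := by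
  unfold AllPark; infer_instance

/-- `a ∈ PF_{n,k}`: `a` is a `k`-Naples parking function of length `n`. -/
def NaplesPF (n k : ℕ) (a : Fin n → ℕ) : Prop :=
  AllPark n n a (fun _ => k)

instance (n k : ℕ) (a : Fin n → ℕ) : Decidable (NaplesPF n k a) := by
  unfold NaplesPF; infer_instance

/-- `a ∈ PF_n`: `a` is a (standard) parking function of length `n`. -/
def IsPF (n : ℕ) (a : Fin n → ℕ) : Prop := NaplesPF n 0 a

instance (n : ℕ) (a : Fin n → ℕ) : Decidable (IsPF n a) := by
  unfold IsPF; infer_instance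

/-- `u_α(j) = Σ_{i=j}^n |α|_i − (n−j+1) = #{i : a_i ≥ j} − (n−j+1)`. -/
def ucount (n : ℕ) (a : Fin n → ℕ) (j : ℕ) : ℤ :=
  ((Finset.univ.filter (fun i : Fin n => j ≤ a i)).card : ℤ) - ((n : ℤ) - (j : ℤ) + 1)

/-- `U_α = {j ∈ [n] : u_α(j) ≥ 1}`. -/
def Uset (n : ℕ) (a : Fin n → ℕ) : Finset ℕ :=
  (Finset.Icc 1 n).filter (fun j => 1 ≤ ucount n a j)

/-- A parking preference of length `n` is complete if `U_α = {2,…,n}`. -/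
def Complete (n : ℕ) (a : Fin n → ℕ) : Prop :=
  Uset n a = Finset.Icc 2 n

instance (n : ℕ) (a : Fin n → ℕ) : Decidable (Complete n a) := by
  unfold Complete; infer_instance

/-- `[p,q]` is a maximal interval of `U_α`. -/
def MaxInterval (n : ℕ) (a : Fin n → ℕ) (p q : ℕ) : Prop :=
  p ≤ q ∧ (∀ j, p ≤ j → j ≤ q → j ∈ Uset n a) ∧ p - 1 ∉ Uset n a ∧ q + 1 ∉ Uset n a

/-!
Every car parks and no two cars share a spot, so the spots form a bijection onto `[n]` and exactly
`j - 1` cars park below `j`. Sorting these cars by preference gives, for any preference,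
`u_α(j) = #{cars crossing j backwards} - #{cars crossing j forwards}`.

For a complete `k`-Naples parking function no car moves forward. If a car with preference `p`
moved forward to `s`, the whole window `[p - k, s)` was occupied when it parked, while
`u_α(s) ≥ 1` forces some car with preference `≥ s` to park backwards below `s`: necessarily
inside that window, hence earlier, so that car passed the then free spot `s`.
-/

section ParkSpot

variable {n p r s : ℕ} {occ : Finset ℕ}

lemma parkSpot_not_mem (h : parkSpot n occ p r = some s) : s ∉ occ := by
  unfold parkSpot at h
  split_ifs at h with h₁ h₂ h₃ <;> cases h
  · exact (mem_filter.1 (max'_mem _ h₂)).2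
  · exact (mem_filter.1 (min'_mem _ h₃)).2
  · exact h₁

lemma parkSpot_backward (h : parkSpot n occ p r = some s) (hs : s < p) :
    max 1 (p - r) ≤ s ∧ ∀ q, s < q → q ≤ p → q ∈ occ := by
  unfold parkSpot at h
  split_ifs at h with h₁ h₂ h₃ <;> cases h
  · have hlo := (mem_Ico.1 (mem_filter.1 (max'_mem _ h₂)).1).1
    refine ⟨hlo, fun q hsq hqp => ?_⟩
    rcases hqp.lt_or_eq with hqp | rfl
    · by_contra hq
      have hq_free : q ∈ (Ico (max 1 (p - r)) p).filter (· ∉ occ) :=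
        mem_filter.2 ⟨mem_Ico.2 ⟨hlo.trans hsq.le, hqp⟩, hq⟩
      exact (le_max' _ q hq_free).not_gt hsq
    · exact h₁
  · exact absurd hs (mem_Ioc.1 (mem_filter.1 (min'_mem _ h₃)).1).1.not_gt
  · exact absurd hs (lt_irrefl _)

lemma parkSpot_forward (h : parkSpot n occ p r = some s) (hs : p < s) :
    s ≤ n ∧ ∀ q, max 1 (p - r) ≤ q → q < s → q ∈ occ := by
  unfold parkSpot at h
  split_ifs at h with h₁ h₂ h₃ <;> cases h
  · exact absurd hs (mem_Ico.1 (mem_filter.1 (max'_mem _ h₂)).1).2.not_gt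
  · have hsn := (mem_Ioc.1 (mem_filter.1 (min'_mem _ h₃)).1).2
    refine ⟨hsn, fun q hlo hqs => ?_⟩
    by_contra hq
    rcases lt_trichotomy q p with hqp | rfl | hpq
    · exact h₂ ⟨q, mem_filter.2 ⟨mem_Ico.2 ⟨hlo, hqp⟩, hq⟩⟩
    · exact hq h₁
    · have hq_free : q ∈ (Ioc p n).filter (· ∉ occ) :=
        mem_filter.2 ⟨mem_Ioc.2 ⟨hpq, hqs.le.trans hsn⟩, hq⟩
      exact (min'_le _ q hq_free).not_gt hqs
  · exact absurd hs (lt_irrefl _)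

end ParkSpot

/-- `ψ(c_i)`; the default `0` only stands in for a car that fails to park. -/
def parkedSpot (n m : ℕ) (a r : Fin m → ℕ) (i : Fin m) : ℕ :=
  (outcome n m a r i).getD 0

lemma occUpTo_mono {n m : ℕ} {a r : Fin m → ℕ} : Monotone (occUpTo n m a r) := by
  refine monotone_nat_of_le_succ fun t => ?_
  rw [occUpTo]
  split
  · split
    · exact subset_insert _ _
    · exact le_rfl
  · exact le_rfl

namespace AllPark

section

variable {n m : ℕ} {a r : Fin m → ℕ} (h : AllPark n m a r)
include h

lemma parkSpot_eq (i : Fin m) :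
    parkSpot n (occUpTo n m a r i) (a i) (r i) = some (parkedSpot n m a r i) := by
  obtain ⟨s, hs⟩ := Option.isSome_iff_exists.1 (h i)
  unfold parkedSpot
  rw [hs]
  exact hs

lemma outcomeE_eq (i : Fin m) : outcomeE n m a r i = parkedSpot n m a r i := by
  rw [outcomeE, outcome, h.parkSpot_eq]
  rfl

lemma occUpTo_succ (i : Fin m) :
    occUpTo n m a r (i + 1) = insert (parkedSpot n m a r i) (occUpTo n m a r i) := by
  rw [occUpTo, dif_pos i.isLt]
  simp only [Fin.eta, h.parkSpot_eq]

lemma mem_occUpTo {t : ℕ} (ht : t ≤ m) {s : ℕ} :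
    s ∈ occUpTo n m a r t ↔ ∃ i : Fin m, i.val < t ∧ parkedSpot n m a r i = s := by
  induction t with
  | zero => simp [occUpTo]
  | succ t ih =>
    rw [h.occUpTo_succ ⟨t, ht⟩, mem_insert, ih (by omega)]
    constructor
    · rintro (rfl | ⟨i, hi, rfl⟩)
      · exact ⟨⟨t, ht⟩, t.lt_succ_self, rfl⟩
      · exact ⟨i, by omega, rfl⟩
    · rintro ⟨i, hi, rfl⟩
      rcases Nat.lt_succ_iff_lt_or_eq.1 hi with hi | hi
      · exact .inr ⟨i, hi, rfl⟩
      · exact .inl (congrArg _ (Fin.ext hi))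

lemma parkedSpot_not_mem (i : Fin m) : parkedSpot n m a r i ∉ occUpTo n m a r i :=
  parkSpot_not_mem (h.parkSpot_eq i)

lemma parkedSpot_injective : Function.Injective (parkedSpot n m a r) := by
  intro i j hij
  by_contra hne
  wlog hlt : i < j generalizing i j
  · exact this hij.symm (Ne.symm hne) (lt_of_le_of_ne (not_lt.1 hlt) (Ne.symm hne))
  have hi : parkedSpot n m a r i ∈ occUpTo n m a r j :=
    occUpTo_mono (Nat.succ_le_of_lt hlt) (h.occUpTo_succ i ▸ mem_insert_self _ _)
  exact h.parkedSpot_not_mem j (hij ▸ hi)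

lemma parkedSpot_mem_Icc (ha : ∀ i, a i ∈ Icc 1 n) (i : Fin m) :
    parkedSpot n m a r i ∈ Icc 1 n := by
  have hai := mem_Icc.1 (ha i)
  rcases lt_trichotomy (parkedSpot n m a r i) (a i) with hlt | heq | hgt
  · have := (parkSpot_backward (h.parkSpot_eq i) hlt).1
    exact mem_Icc.2 ⟨(le_max_left _ _).trans this, by omega⟩
  · exact heq ▸ ha i
  · exact mem_Icc.2 ⟨by omega, (parkSpot_forward (h.parkSpot_eq i) hgt).1⟩

lemma pref_lt_of_parkedSpot_lt {i : Fin m} {s : ℕ} (hs : s ∉ occUpTo n m a r i)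
    (hlt : parkedSpot n m a r i < s) : a i < s := by
  by_contra! hge
  exact hs ((parkSpot_backward (h.parkSpot_eq i) (hlt.trans_le hge)).2 s hlt hge)

end

section Square

variable {n : ℕ} {a r : Fin n → ℕ} (h : AllPark n n a r) (ha : ∀ i, a i ∈ Icc 1 n)
include h ha

lemma image_parkedSpot : univ.image (parkedSpot n n a r) = Icc 1 n :=
  eq_of_subset_of_card_le (image_subset_iff.2 fun i _ => h.parkedSpot_mem_Icc ha i)
    (by simp [card_image_of_injective _ h.parkedSpot_injective])

lemma card_parkedSpot_lt {j : ℕ} (hj : j ≤ n + 1) :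
    #{i | parkedSpot n n a r i < j} = j - 1 := by
  rw [← card_image_of_injective _ h.parkedSpot_injective, ← filter_image (p := (· < j)),
    h.image_parkedSpot ha, ← Nat.card_Ico 1 j]
  congr 1
  ext q
  simp only [mem_filter, mem_Icc, mem_Ico]
  omega

lemma card_backward_sub_card_forward {j : ℕ} (hj : j ∈ Icc 1 (n + 1)) :
    (#{i | j ≤ a i ∧ parkedSpot n n a r i < j} : ℤ)
      - #{i | a i < j ∧ j ≤ parkedSpot n n a r i} = ucount n a j := by
  obtain ⟨hj₁, hj₂⟩ := mem_Icc.1 hj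
  have hbelow : #{i | j ≤ a i ∧ parkedSpot n n a r i < j}
      + #{i | a i < j ∧ parkedSpot n n a r i < j} = j - 1 := by
    rw [← h.card_parkedSpot_lt ha hj₂,
      ← card_filter_add_card_filter_not (s := {i | parkedSpot n n a r i < j}) (j ≤ a ·)]
    simp only [filter_filter, not_le, and_comm]
  have hsmall_pref : #{i | a i < j ∧ parkedSpot n n a r i < j}
      + #{i | a i < j ∧ j ≤ parkedSpot n n a r i} = #{i | a i < j} := by
    rw [← card_filter_add_card_filter_not (s := {i | a i < j}) (parkedSpot n n a r · < j)]
    simp only [filter_filter, not_lt]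
  have hall : #{i | j ≤ a i} + #{i | a i < j} = n := by
    simpa only [not_le, card_univ, Fintype.card_fin] using
      card_filter_add_card_filter_not (s := univ) (j ≤ a ·)
  rw [ucount]
  omega

lemma exists_backward_of_one_le_ucount {s : ℕ} (hs : s ∈ Icc 1 (n + 1))
    (hu : 1 ≤ ucount n a s) : ∃ i, s ≤ a i ∧ parkedSpot n n a r i < s := by
  have hcount := h.card_backward_sub_card_forward ha hs
  obtain ⟨i, hi⟩ := card_pos.1 (by omega : 0 < #{i | s ≤ a i ∧ parkedSpot n n a r i < s})
  exact ⟨i, (mem_filter.1 hi).2⟩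

end Square

end AllPark

theorem AllPark.parkedSpot_le_of_complete {n k : ℕ} {a : Fin n → ℕ}
    (h : AllPark n n a fun _ => k) (ha : ∀ i, a i ∈ Icc 1 n) (hcomp : Complete n a)
    (t : Fin n) :
    parkedSpot n n a (fun _ => k) t ≤ a t := by
  by_contra! hfwd
  set s := parkedSpot n n a (fun _ => k) t
  obtain ⟨hsn, hwindow⟩ := parkSpot_forward (h.parkSpot_eq t) hfwd
  have hat := mem_Icc.1 (ha t)
  have hu : 1 ≤ ucount n a s := by
    have hsU : s ∈ Uset n a := hcomp ▸ mem_Icc.2 ⟨by omega, hsn⟩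
    exact (mem_filter.1 hsU).2
  obtain ⟨i, hai, his⟩ :=
    h.exists_backward_of_one_le_ucount ha (mem_Icc.2 ⟨by omega, by omega⟩) hu
  have hi_low := (parkSpot_backward (h.parkSpot_eq i) (his.trans_le hai)).1
  obtain ⟨i', hi't, hi'⟩ := (h.mem_occUpTo t.isLt.le).1 (hwindow _ (by omega) his)
  obtain rfl := h.parkedSpot_injective hi'
  have hs_free : s ∉ occUpTo n n a (fun _ => k) i' :=
    fun hs => h.parkedSpot_not_mem t (occUpTo_mono hi't.le hs)
  exact (h.pref_lt_of_parkedSpot_lt hs_free his).not_ge hai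

theorem statement9_general (n k : ℕ) (a : Fin n → ℕ)
    (ha : ∀ i, a i ∈ Finset.Icc 1 n) (hcomp : Complete n a)
    (hpf : NaplesPF n k a) :
    ∀ j ∈ Finset.Icc 1 n,
      ((Finset.univ.filter (fun i : Fin n =>
          j ≤ a i ∧ outcomeE n n a (fun _ => k) i < (j : ENat))).card : ℤ)
        = ucount n a j := by
  intro j hj
  have hpf : AllPark n n a fun _ => k := hpf
  have hno_forward : #{i | a i < j ∧ j ≤ parkedSpot n n a (fun _ => k) i} = 0 :=
    card_eq_zero.2 <| filter_eq_empty_iff.2 fun i _ hi =>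
      (hi.2.trans (hpf.parkedSpot_le_of_complete ha hcomp i)).not_gt hi.1
  have hcount := hpf.card_backward_sub_card_forward ha (Icc_subset_Icc_right n.le_succ hj)
  simp only [hpf.outcomeE_eq, Nat.cast_lt]
  rw [← hcount, hno_forward, Nat.cast_zero, sub_zero]

/-- if `α ∈ PF_{n,k}` is complete, then for every `j ∈ [n]`
exactly `u_α(j)` cars with preference `≥ j` park in spots `< j`. -/
theorem statement9 (n k : ℕ) (hn : 2 ≤ n) (hk : 1 ≤ k) (a : Fin n → ℕ)
    (ha : ∀ i, a i ∈ Finset.Icc 1 n) (hcomp : Complete n a)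
    (hpf : NaplesPF n k a) :
    ∀ j ∈ Finset.Icc 1 n,
      ((Finset.univ.filter (fun i : Fin n =>
          j ≤ a i ∧ outcomeE n n a (fun _ => k) i < (j : ENat))).card : ℤ)
        = ucount n a j :=
  statement9_general n k a ha hcomp hpf
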